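/- Let m ∈ ℕ with m ≥ 1 and let z ∈ ℕ with 0 ≤ z < 2^{2m+2}, with binary representation z_{2m+1}z_{2m}…z_0, and let z_{-2} denote the natural number whose binary representation is z_{2m-1}…z_0 (i.e., z reduced modulo 2^{2m}). Then Σ_{x=0}^{2^{2m+1}-1} i^{w(x)} (-1)^{Σ_{j=0}^{2m} z_j x_j} = (-1)^{w(z_{-2})} · i^{m+w(z_{-2})} · 2^m · (1 + i·(-1)^{z_{2m}}), where the sum is taken in ℂ. -/

import Mathlib

/-!
Since `i^{w(x)} (-1)^{z·x} = ∏_j (i (-1)^{z_j})^{x_j}`, the sum over all `x < 2^n` factors as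
`∏_{j<n} (1 + i (-1)^{z_j})`. Each factor equals `(1 + i)(-i)^{z_j}`, and `(1 + i)^2 = 2i`,
so the first `2m` factors contribute `2^m i^m (-i)^{w(z_{-2})}`.
-/

open Finset

/-- Hamming weight of a natural number: number of 1s in its binary representation. -/
def hw (x : ℕ) : ℕ := (Nat.digits 2 x).sum

/-- The `j`-th bit of `z`, as a natural number in `{0,1}`. -/
def nbit (z j : ℕ) : ℕ := if z.testBit j then 1 else 0

/-- Partial bitwise dot product `∑_{j=0}^{n-1} z_j x_j`. -/
def ndot (n z x : ℕ) : ℕ := ∑ j ∈ Finset.range n, nbit z j * nbit x j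

lemma hw_eq_nbit_zero_add_hw_div_two (x : ℕ) : hw x = nbit x 0 + hw (x / 2) := by
  rcases Nat.eq_zero_or_pos x with rfl | hx
  · simp [hw, nbit]
  · rw [hw, Nat.digits_def' (by norm_num) hx, List.sum_cons, hw]
    congr 1
    simp only [nbit, Nat.testBit_zero, decide_eq_true_eq]
    split <;> omega

lemma hw_eq_sum_nbit {n x : ℕ} (hx : x < 2 ^ n) : hw x = ∑ j ∈ range n, nbit x j := by
  induction n generalizing x with
  | zero => simp [Nat.lt_one_iff.mp (by simpa using hx), hw]
  | succ n ih =>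
    have nbit_succ (j : ℕ) : nbit x (j + 1) = nbit (x / 2) j := by
      simp [nbit, Nat.testBit_add_one]
    rw [sum_range_succ', hw_eq_nbit_zero_add_hw_div_two, ih (by omega)]
    simp only [nbit_succ, add_comm]

lemma nbit_eq_zero_of_lt_two_pow {n x j : ℕ} (hx : x < 2 ^ n) (hj : n ≤ j) : nbit x j = 0 := by
  simp [nbit, Nat.testBit_lt_two_pow (hx.trans_le (Nat.pow_le_pow_right (by norm_num) hj))]

lemma nbit_two_pow_add_self {n x : ℕ} (hx : x < 2 ^ n) : nbit (2 ^ n + x) n = 1 := by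
  simp [nbit, Nat.testBit_two_pow_add_eq, Nat.testBit_lt_two_pow hx]

lemma nbit_two_pow_add_of_lt {n x j : ℕ} (hj : j < n) : nbit (2 ^ n + x) j = nbit x j := by
  simp [nbit, Nat.testBit_two_pow_add_gt hj]

lemma sum_range_nbit_two_pow_add (f : ℕ → ℕ) (n x : ℕ) :
    ∑ j ∈ range n, f j * nbit (2 ^ n + x) j = ∑ j ∈ range n, f j * nbit x j :=
  sum_congr rfl fun _ hj => by rw [nbit_two_pow_add_of_lt (mem_range.mp hj)]

lemma hw_two_pow_add {n x : ℕ} (hx : x < 2 ^ n) : hw (2 ^ n + x) = hw x + 1 := by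
  have h := sum_range_nbit_two_pow_add (fun _ => 1) n x
  simp only [one_mul] at h
  rw [hw_eq_sum_nbit (n := n + 1) (by omega), hw_eq_sum_nbit hx, sum_range_succ, h,
    nbit_two_pow_add_self hx]

lemma ndot_succ_of_lt {n z x : ℕ} (hx : x < 2 ^ n) : ndot (n + 1) z x = ndot n z x := by
  rw [ndot, ndot, sum_range_succ, nbit_eq_zero_of_lt_two_pow hx le_rfl, mul_zero, add_zero]

lemma ndot_succ_two_pow_add {n z x : ℕ} (hx : x < 2 ^ n) :
    ndot (n + 1) z (2 ^ n + x) = ndot n z x + nbit z n := by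
  rw [ndot, ndot, sum_range_succ, sum_range_nbit_two_pow_add, nbit_two_pow_add_self hx, mul_one]

theorem sum_I_pow_hw_mul_neg_one_pow_ndot (n z : ℕ) :
    ∑ x ∈ range (2 ^ n), Complex.I ^ hw x * (-1) ^ ndot n z x =
      ∏ j ∈ range n, (1 + Complex.I * (-1) ^ nbit z j) := by
  induction n with
  | zero => simp [hw, ndot]
  | succ n ih =>
    have lower : ∑ x ∈ range (2 ^ n), Complex.I ^ hw x * (-1) ^ ndot (n + 1) z x =
        ∑ x ∈ range (2 ^ n), Complex.I ^ hw x * (-1) ^ ndot n z x :=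
      sum_congr rfl fun x hx => by rw [ndot_succ_of_lt (mem_range.mp hx)]
    have upper : ∑ x ∈ range (2 ^ n),
          Complex.I ^ hw (2 ^ n + x) * (-1) ^ ndot (n + 1) z (2 ^ n + x) =
        (∑ x ∈ range (2 ^ n), Complex.I ^ hw x * (-1) ^ ndot n z x) *
          (Complex.I * (-1) ^ nbit z n) := by
      rw [sum_mul]
      refine sum_congr rfl fun x hx => ?_
      rw [hw_two_pow_add (mem_range.mp hx), ndot_succ_two_pow_add (mem_range.mp hx), pow_succ,
        pow_add]
      ring
    rw [prod_range_succ, ← ih, pow_succ, mul_two, sum_range_add, lower, upper]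
    ring

lemma one_add_I_mul_neg_one_pow_nbit (z j : ℕ) :
    1 + Complex.I * (-1) ^ nbit z j = (1 + Complex.I) * (-Complex.I) ^ nbit z j := by
  by_cases h : z.testBit j
  · simp [nbit, h]
    linear_combination Complex.I_sq
  · simp [nbit, h]

lemma one_add_I_pow_two_mul (m : ℕ) : (1 + Complex.I) ^ (2 * m) = 2 ^ m * Complex.I ^ m := by
  rw [pow_mul, ← mul_pow]
  congr 1
  linear_combination Complex.I_sq

lemma hw_mod_two_pow (n z : ℕ) : hw (z % 2 ^ n) = ∑ j ∈ range n, nbit z j := by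
  rw [hw_eq_sum_nbit (Nat.mod_lt _ (by positivity))]
  exact sum_congr rfl fun j hj => by simp [nbit, Nat.testBit_mod_two_pow, mem_range.mp hj]

theorem stmt_6_general (m : ℕ) (z : ℕ) :
    ∑ x ∈ Finset.range (2 ^ (2 * m + 1)), Complex.I ^ hw x * (-1) ^ ndot (2 * m + 1) z x =
      (-1) ^ hw (z % 2 ^ (2 * m)) * Complex.I ^ (m + hw (z % 2 ^ (2 * m))) * 2 ^ m *
        (1 + Complex.I * (-1) ^ nbit z (2 * m)) := by
  have low_bits : ∏ j ∈ range (2 * m), (1 + Complex.I * (-1) ^ nbit z j) =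
      2 ^ m * Complex.I ^ m * (-Complex.I) ^ hw (z % 2 ^ (2 * m)) := by
    simp only [one_add_I_mul_neg_one_pow_nbit]
    rw [prod_mul_distrib, prod_const, card_range, prod_pow_eq_pow_sum, one_add_I_pow_two_mul,
      hw_mod_two_pow]
  rw [sum_I_pow_hw_mul_neg_one_pow_ndot, prod_range_succ, low_bits, neg_pow, pow_add]
  ring

theorem stmt_6 (m : ℕ) (hm : 1 ≤ m) (z : ℕ) (hz : z < 2 ^ (2 * m + 2)) :
    ∑ x ∈ Finset.range (2 ^ (2 * m + 1)), Complex.I ^ hw x * (-1) ^ ndot (2 * m + 1) z x =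
      (-1) ^ hw (z % 2 ^ (2 * m)) * Complex.I ^ (m + hw (z % 2 ^ (2 * m))) * 2 ^ m *
        (1 + Complex.I * (-1) ^ nbit z (2 * m)) :=
  stmt_6_general m z
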